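/- Let M be a d-CS-Rickart right R-module and S = End(M). Then: (1) for any idempotents e, f ∈ S there exists an idempotent g ∈ S such that eM + fM lies above gM; (2) if A lies above eM and B lies above fM for idempotents e, f ∈ S, then there exists an idempotent g ∈ S such that A + B lies above gM; (3) for any φ₁, …, φₙ ∈ S there exists an idempotent e ∈ S such that Σ_{i=1}^{n} im φᵢ lies above eM; (4) M is an SSP-d-CS module. -/

import Mathlib

/-!
A submodule lies above a direct summand `D` exactly when it is `D + S` with `S` small in `M`.
For an idempotent `e`, `eM + fM = eM + (1 - e)fM`; by hypothesis `(1 - e)fM = D + S` with `D`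
a summand contained in `(1 - e)M`, so `eM + fM = (eM ⊕ D) + S` and `eM ⊕ D` is again a summand
by the modular law. Since small submodules are closed under finite sums, a sum of two submodules
lying above summands `eM`, `fM` lies above whatever summand `eM + fM` lies above, and induction
handles finite sums.
-/

namespace CSRickartPaper

section Defs

variable {R : Type*} [Ring R] {M : Type*} [AddCommGroup M] [Module R M]

/-- `N` is an essential submodule of `P` (inside the ambient module `M`):
`N ≤ P` and every submodule of `P` intersecting `N` trivially is zero. -/
def EssentialIn (N P : Submodule R M) : Prop :=
  N ≤ P ∧ ∀ K : Submodule R M, K ≤ P → N ⊓ K = ⊥ → K = ⊥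

/-- `N` is a small (superfluous) submodule of `P`. -/
def SmallIn (N P : Submodule R M) : Prop :=
  N ≤ P ∧ ∀ K : Submodule R M, K ≤ P → N ⊔ K = P → K = P

/-- `N` is a direct summand of `M`. -/
def IsDirectSummand (N : Submodule R M) : Prop :=
  ∃ K : Submodule R M, IsCompl N K

/-- `N` lies above the direct summand `D` of `M`: `M = D ⊕ K`, `D ≤ N` and
`N ⊓ K` is small in `K`. -/
def LiesAbove (N D : Submodule R M) : Prop :=
  ∃ K : Submodule R M, IsCompl D K ∧ D ≤ N ∧ SmallIn (N ⊓ K) K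

/-- `N` lies above a direct summand of `M`. -/
def LiesAboveSummand (N : Submodule R M) : Prop :=
  ∃ D : Submodule R M, LiesAbove N D

end Defs

section ModuleDefs

variable (R : Type*) [Ring R] (M : Type*) [AddCommGroup M] [Module R M]

/-- `M` is a CS-Rickart module: the kernel of every endomorphism is essential
in a direct summand `eM`, `e` an idempotent endomorphism. -/
def IsCSRickart : Prop :=
  ∀ φ : Module.End R M, ∃ e : Module.End R M, IsIdempotentElem e ∧
    EssentialIn (LinearMap.ker φ) (LinearMap.range e)

/-- `M` is a d-CS-Rickart module: the image of every endomorphism lies above a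
direct summand of `M`. -/
def IsDCSRickart : Prop :=
  ∀ φ : Module.End R M, LiesAboveSummand (LinearMap.range φ)

/-- `M` is a Rickart module. -/
def IsRickart : Prop :=
  ∀ φ : Module.End R M, ∃ e : Module.End R M, IsIdempotentElem e ∧
    LinearMap.ker φ = LinearMap.range e

/-- `M` is a dual Rickart module. -/
def IsDRickart : Prop :=
  ∀ φ : Module.End R M, ∃ e : Module.End R M, IsIdempotentElem e ∧
    LinearMap.range φ = LinearMap.range e

/-- `M` is a CS (extending) module. -/
def IsCSModule : Prop :=
  ∀ N : Submodule R M, ∃ D : Submodule R M, IsDirectSummand D ∧ EssentialIn N D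

/-- `M` is a lifting (d-CS) module. -/
def IsLifting : Prop :=
  ∀ N : Submodule R M, LiesAboveSummand N

/-- `M` is a singular module: the annihilator of every element is an essential
ideal of `R`. -/
def IsSingularModule : Prop :=
  ∀ m : M, EssentialIn (LinearMap.ker (LinearMap.toSpanSingleton R M m)) (⊤ : Submodule R R)

/-- `M` is uniform: every nonzero submodule is essential. -/
def IsUniformModule : Prop :=
  ∀ N : Submodule R M, N ≠ ⊥ → EssentialIn N (⊤ : Submodule R M)

/-- `M` satisfies the C₂ condition: every submodule isomorphic to a direct
summand is itself a direct summand. -/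
def IsC2 : Prop :=
  ∀ N D : Submodule R M, IsDirectSummand D → Nonempty (N ≃ₗ[R] D) → IsDirectSummand N

/-- `M` is K-nonsingular. -/
def IsKNonsingular : Prop :=
  ∀ φ : Module.End R M, ∀ N : Submodule R M, EssentialIn N (⊤ : Submodule R M) →
    N ≤ LinearMap.ker φ → φ = 0

/-- `M` is T-noncosingular. -/
def IsTNoncosingular : Prop :=
  ∀ φ : Module.End R M, φ ≠ 0 → ¬ SmallIn (LinearMap.range φ) (⊤ : Submodule R M)

/-- `M` is an SIP-CS module. -/
def IsSIPCS : Prop :=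
  ∀ A B : Submodule R M, IsDirectSummand A → IsDirectSummand B →
    ∃ D : Submodule R M, IsDirectSummand D ∧ EssentialIn (A ⊓ B) D

/-- `M` is an SSP-d-CS module. -/
def IsSSPdCS : Prop :=
  ∀ A B : Submodule R M, IsDirectSummand A → IsDirectSummand B →
    LiesAboveSummand (A ⊔ B)

end ModuleDefs

section RelDefs

variable (R : Type*) [Ring R] (M N : Type*) [AddCommGroup M] [Module R M]
  [AddCommGroup N] [Module R N]

/-- `M` is relatively CS-Rickart to `N`. -/
def IsRelCSRickart : Prop :=
  ∀ φ : M →ₗ[R] N, ∃ e : Module.End R M, IsIdempotentElem e ∧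
    EssentialIn (LinearMap.ker φ) (LinearMap.range e)

/-- `M` is relatively d-CS-Rickart to `N`. -/
def IsRelDCSRickart : Prop :=
  ∀ φ : M →ₗ[R] N, LiesAboveSummand (LinearMap.range φ)

/-- `N` is `M`-injective. -/
def IsRelInjective : Prop :=
  ∀ (A : Submodule R M) (f : A →ₗ[R] N), ∃ g : M →ₗ[R] N, ∀ a : A, g a = f a

end RelDefs

section RingDefs

variable (R : Type*) [Ring R]

/-- The annihilator of an element `a` of `R`, as an ideal (kernel of `r ↦ r • a`). -/
def annElem (a : R) : Submodule R R :=
  LinearMap.ker (LinearMap.toSpanSingleton R R a)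

/-- The annihilator of a subset `X` of `R`. -/
def annSet (X : Set R) : Submodule R R :=
  ⨅ x ∈ X, annElem R x

/-- The principal ideal generated by `e`, i.e. the image of `r ↦ r • e`. -/
def idealGen (e : R) : Submodule R R :=
  LinearMap.range (LinearMap.toSpanSingleton R R e)

/-- `R` is an ACS ring: the annihilator of every element is essential in a
direct summand `eR` of `R`. -/
def IsACSRing : Prop :=
  ∀ a : R, ∃ e : R, IsIdempotentElem e ∧ EssentialIn (annElem R a) (idealGen R e)

/-- `R` is an essentially Baer ring. -/
def IsEssentiallyBaer : Prop :=
  ∀ X : Set R, X.Nonempty → ∃ e : R, IsIdempotentElem e ∧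
    EssentialIn (annSet R X) (idealGen R e)

/-- The Jacobson radical of the ring `R`. -/
noncomputable def jacRad : Ideal R := Ideal.jacobson (⊥ : Ideal R)

/-- `R` is semiregular: `R/J(R)` is von Neumann regular and idempotents lift
modulo `J(R)` (stated elementwise). -/
def IsSemiregularRing : Prop :=
  (∀ a : R, ∃ b : R, a - a * b * a ∈ jacRad R) ∧
  (∀ a : R, a - a * a ∈ jacRad R →
    ∃ e : R, IsIdempotentElem e ∧ e - a ∈ jacRad R)

/-- `J(R)` coincides with the singular ideal `Z(R)`. -/
def JacEqSingular : Prop :=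
  ∀ a : R, a ∈ jacRad R ↔ EssentialIn (annElem R a) (⊤ : Submodule R R)

end RingDefs

section GenDefs

variable {R : Type*} [Ring R] {M : Type*} [AddCommGroup M] [Module R M]

/-- A submodule is `n`-generated if it is spanned by at most `n` elements. -/
def NGen (n : ℕ) (N : Submodule R M) : Prop :=
  ∃ f : Fin n → M, Submodule.span R (Set.range f) = N

end GenDefs

end CSRickartPaper

theorem IsCompl.sup_inf_of_le {α : Type*} [Lattice α] [BoundedOrder α] [IsModularLattice α]
    {P Q D K : α} (hPQ : IsCompl P Q) (hDK : IsCompl D K) (hDQ : D ≤ Q) :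
    IsCompl (P ⊔ D) (K ⊓ Q) := by
  have hQ : D ⊔ K ⊓ Q = Q := by
    rw [← sup_inf_assoc_of_le K hDQ, hDK.sup_eq_top, top_inf_eq]
  constructor
  · rw [disjoint_iff, ← inf_assoc, inf_right_comm, sup_comm, sup_inf_assoc_of_le P hDQ,
      hPQ.inf_eq_bot, sup_bot_eq, hDK.inf_eq_bot]
  · rw [codisjoint_iff, sup_assoc, hQ, hPQ.sup_eq_top]

namespace CSRickartPaper

open LinearMap

section

variable {R : Type*} [Ring R] {M : Type*} [AddCommGroup M] [Module R M]

namespace SmallIn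

variable {S T P : Submodule R M}

theorem mono {S' : Submodule R M} (h : SmallIn S P) (hle : S' ≤ S) : SmallIn S' P :=
  ⟨hle.trans h.1, fun K hK hsup =>
    h.2 K hK (le_antisymm (sup_le h.1 hK) (hsup ▸ sup_le_sup_right hle K))⟩

theorem smallIn_top (h : SmallIn S P) : SmallIn S ⊤ := by
  refine ⟨le_top, fun X _ hsup => ?_⟩
  have hXP : X ⊓ P = P := by
    refine h.2 _ inf_le_right ?_
    rw [← sup_inf_assoc_of_le X h.1, hsup, top_inf_eq]
  rw [← hsup, sup_eq_right.2 (h.1.trans (hXP ▸ inf_le_left))]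

theorem of_isCompl {Q : Submodule R M} (h : SmallIn S ⊤) (hSP : S ≤ P) (hPQ : IsCompl P Q) :
    SmallIn S P := by
  refine ⟨hSP, fun X hX hsup => ?_⟩
  have hXQ : X ⊔ Q = ⊤ := h.2 _ le_top (by rw [← sup_assoc, hsup, hPQ.sup_eq_top])
  have hP := sup_inf_assoc_of_le Q hX
  rwa [hXQ, top_inf_eq, hPQ.symm.inf_eq_bot, sup_bot_eq, eq_comm] at hP

theorem sup (hS : SmallIn S ⊤) (hT : SmallIn T ⊤) : SmallIn (S ⊔ T) ⊤ :=
  ⟨le_top, fun X hX hsup => hT.2 X hX (hS.2 _ le_top (by rwa [sup_assoc] at hsup))⟩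

theorem bot : SmallIn (⊥ : Submodule R M) P :=
  ⟨bot_le, fun K _ hK => by rwa [bot_sup_eq] at hK⟩

theorem map {M₂ : Type*} [AddCommGroup M₂] [Module R M₂] (f : M →ₗ[R] M₂)
    (h : SmallIn S ⊤) : SmallIn (S.map f) ⊤ := by
  refine ⟨le_top, fun X _ hsup => ?_⟩
  have hcomap : S ⊔ X.comap f = ⊤ := by
    refine eq_top_iff.2 fun m _ => ?_
    obtain ⟨_, ⟨s, hs, rfl⟩, x, hx, hsx⟩ :=
      Submodule.mem_sup.1 (hsup ▸ Submodule.mem_top : f m ∈ S.map f ⊔ X)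
    refine Submodule.mem_sup.2 ⟨s, hs, m - s, ?_, add_sub_cancel s m⟩
    rwa [Submodule.mem_comap, map_sub, ← hsx, add_sub_cancel_left]
  have hmap : S.map f ≤ X := Submodule.map_le_iff_le_comap.2 (h.2 _ le_top hcomap ▸ le_top)
  rw [← hsup, sup_eq_right.2 hmap]

end SmallIn

namespace LiesAbove

variable {N A B D E G : Submodule R M}

theorem exists_eq_sup_smallIn (h : LiesAbove N D) : ∃ S, SmallIn S ⊤ ∧ N = D ⊔ S := by
  obtain ⟨K, hDK, hDN, hsmall⟩ := h
  refine ⟨N ⊓ K, hsmall.smallIn_top, ?_⟩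
  rw [inf_comm, ← sup_inf_assoc_of_le K hDN, hDK.sup_eq_top, top_inf_eq]

-- The projection along `D` maps `D ⊔ S` into the image of `S`, and so `N ⊓ K` into it.
theorem of_eq_sup_smallIn {K S : Submodule R M} (hDK : IsCompl D K) (hS : SmallIn S ⊤)
    (hN : N = D ⊔ S) : LiesAbove N D := by
  refine ⟨K, hDK, hN ▸ le_sup_left, ?_⟩
  set π := K.projection D hDK.symm
  have hNK : N ⊓ K ≤ S.map π := by
    rintro x ⟨hxN, hxK⟩
    obtain ⟨d, hd, s, hs, rfl⟩ := Submodule.mem_sup.1 (hN ▸ hxN)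
    refine ⟨s, hs, ?_⟩
    rw [← Submodule.projection_apply_of_mem_left hDK.symm hxK, map_add,
      (Submodule.projection_apply_eq_zero_iff hDK.symm).2 hd, zero_add]
  exact ((hS.map π).mono hNK).of_isCompl inf_le_right hDK.symm

theorem self {K : Submodule R M} (hDK : IsCompl D K) : LiesAbove D D :=
  of_eq_sup_smallIn hDK SmallIn.bot (sup_bot_eq D).symm

theorem sup_of_liesAbove_sup (hA : LiesAbove A D) (hB : LiesAbove B E)
    (hG : LiesAbove (D ⊔ E) G) : LiesAbove (A ⊔ B) G := by
  obtain ⟨SA, hSA, rfl⟩ := hA.exists_eq_sup_smallIn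
  obtain ⟨SB, hSB, rfl⟩ := hB.exists_eq_sup_smallIn
  obtain ⟨SG, hSG, hDE⟩ := hG.exists_eq_sup_smallIn
  obtain ⟨K, hGK, -⟩ := hG
  refine of_eq_sup_smallIn hGK (hSG.sup (hSA.sup hSB)) ?_
  rw [sup_sup_sup_comm, hDE, sup_assoc]

theorem sup_left_of_isCompl {P Q : Submodule R M} (hPQ : IsCompl P Q) (hNQ : N ≤ Q)
    (h : LiesAbove N D) : LiesAbove (P ⊔ N) (P ⊔ D) := by
  obtain ⟨S, hS, hN⟩ := h.exists_eq_sup_smallIn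
  obtain ⟨K, hDK, hDN, -⟩ := h
  refine of_eq_sup_smallIn (hPQ.sup_inf_of_le hDK (hDN.trans hNQ)) hS ?_
  rw [hN, sup_assoc]

end LiesAbove

theorem liesAboveSummand_iff_exists_isIdempotentElem {N : Submodule R M} :
    LiesAboveSummand N ↔
      ∃ g : Module.End R M, IsIdempotentElem g ∧ LiesAbove N (range g) := by
  refine ⟨fun ⟨D, K, hDK, hD⟩ => ?_, fun ⟨g, _, hg⟩ => ⟨_, hg⟩⟩
  refine ⟨D.projection K hDK, Submodule.isIdempotentElem_projection hDK, ?_⟩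
  rw [Submodule.range_projection]
  exact ⟨K, hDK, hD⟩

theorem IsDirectSummand.liesAboveSummand {D : Submodule R M} (h : IsDirectSummand D) :
    LiesAboveSummand D :=
  ⟨D, LiesAbove.self h.choose_spec⟩

theorem range_sup_range_eq_range_sup_range_one_sub_mul (e f : Module.End R M) :
    range e ⊔ range f = range e ⊔ range ((1 - e) * f) := by
  have hf : ∀ x, ((1 - e) * f) x = f x - e (f x) := fun x => rfl
  refine le_antisymm (sup_le le_sup_left ?_) (sup_le le_sup_left ?_) <;> rintro _ ⟨x, rfl⟩
  · rw [← add_sub_cancel (e (f x)) (f x), ← hf]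
    exact add_mem (Submodule.mem_sup_left (mem_range_self e _))
      (Submodule.mem_sup_right (mem_range_self _ x))
  · rw [hf]
    exact sub_mem (Submodule.mem_sup_right (mem_range_self f x))
      (Submodule.mem_sup_left (mem_range_self e _))

theorem range_one_sub_mul_le_ker {e : Module.End R M} (he : IsIdempotentElem e)
    (f : Module.End R M) : range ((1 - e) * f) ≤ ker e :=
  (range_comp_le_range f (1 - e)).trans (LinearMap.IsIdempotentElem.ker_eq_range_one_sub he).ge

namespace IsDCSRickart

theorem liesAboveSummand_range_sup_range (h : IsDCSRickart R M) {e : Module.End R M}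
    (he : IsIdempotentElem e) (f : Module.End R M) : LiesAboveSummand (range e ⊔ range f) := by
  obtain ⟨D, hD⟩ := h ((1 - e) * f)
  rw [range_sup_range_eq_range_sup_range_one_sub_mul]
  exact ⟨_, hD.sup_left_of_isCompl (LinearMap.IsIdempotentElem.isCompl he)
    (range_one_sub_mul_le_ker he f)⟩

theorem liesAboveSummand_sup (h : IsDCSRickart R M) {A B : Submodule R M}
    (hA : LiesAboveSummand A) (hB : LiesAboveSummand B) : LiesAboveSummand (A ⊔ B) := by
  obtain ⟨e, he, hAe⟩ := liesAboveSummand_iff_exists_isIdempotentElem.1 hA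
  obtain ⟨f, -, hBf⟩ := liesAboveSummand_iff_exists_isIdempotentElem.1 hB
  obtain ⟨G, hG⟩ := h.liesAboveSummand_range_sup_range he f
  exact ⟨G, hAe.sup_of_liesAbove_sup hBf hG⟩

theorem liesAboveSummand_iSup (h : IsDCSRickart R M) {ι : Type*} [Fintype ι]
    {N : ι → Submodule R M} (hN : ∀ i, LiesAboveSummand (N i)) :
    LiesAboveSummand (⨆ i, N i) := by
  rw [← Finset.sup_univ_eq_iSup]
  exact Finset.sup_induction (IsDirectSummand.liesAboveSummand ⟨⊤, isCompl_bot_top⟩)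
    (fun _ hA _ hB => h.liesAboveSummand_sup hA hB) fun i _ => hN i

end IsDCSRickart

end

/-- Properties of d-CS-Rickart modules: sums of direct summands lie above direct
summands, finite sums of images lie above direct summands, and `M` has the
SSP-d-CS property. -/
theorem dcsRickart_sspDCS
    {R : Type*} [Ring R] {M : Type*} [AddCommGroup M] [Module R M]
    (h : IsDCSRickart R M) :
    (∀ e f : Module.End R M, IsIdempotentElem e → IsIdempotentElem f →
      ∃ g : Module.End R M, IsIdempotentElem g ∧
        LiesAbove (LinearMap.range e ⊔ LinearMap.range f) (LinearMap.range g)) ∧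
    (∀ (e f : Module.End R M) (A B : Submodule R M),
      IsIdempotentElem e → IsIdempotentElem f →
      LiesAbove A (LinearMap.range e) → LiesAbove B (LinearMap.range f) →
      ∃ g : Module.End R M, IsIdempotentElem g ∧ LiesAbove (A ⊔ B) (LinearMap.range g)) ∧
    (∀ (n : ℕ) (φ : Fin n → Module.End R M),
      ∃ e : Module.End R M, IsIdempotentElem e ∧
        LiesAbove (⨆ i, LinearMap.range (φ i)) (LinearMap.range e)) ∧
    IsSSPdCS R M := by
  refine ⟨fun e f he _ => ?_, fun e f A B _ _ hA hB => ?_, fun n φ => ?_, fun A B hA hB => ?_⟩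
  · exact liesAboveSummand_iff_exists_isIdempotentElem.1
      (h.liesAboveSummand_range_sup_range he f)
  · exact liesAboveSummand_iff_exists_isIdempotentElem.1
      (h.liesAboveSummand_sup ⟨_, hA⟩ ⟨_, hB⟩)
  · exact liesAboveSummand_iff_exists_isIdempotentElem.1
      (h.liesAboveSummand_iSup fun i => h (φ i))
  · exact h.liesAboveSummand_sup hA.liesAboveSummand hB.liesAboveSummand

end CSRickartPaper
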